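/- arXiv:2001.08638 — 6 statements merged into one kernel-verified Lean document; each statement's English description precedes it below -/
import Mathlib

section
/- Let A be an abelian category and V an object such that all set-indexed coproducts of copies of V exist in A. If Gen(V) ⊆ Ker(Ext^1_A(V, −)), then (Gen(V), V^⊥) is a torsion pair in A, where for each object A one uses the trace tr_V(A) (the image of the canonical map V^{(Hom(V,A))} → A) as the torsion subobject. -/
/-!
Every map `V → A` factors through the trace `t = tr_V(A)`. Given `f : V → A / t`, pulling back
`0 → t → A → A / t → 0` along `f` gives an extension of `V` by `t ∈ Gen(V)`, which splits since
`Ext¹(V, t) = 0`; so `f` lifts to `A` and hence vanishes. Maps from `V^{(I)}` into `V^⊥` vanish on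
each summand, so `Hom(Gen(V), V^⊥) = 0`.
-/

open CategoryTheory CategoryTheory.Limits

universe v u

namespace Paper

structure TorsionPair {C : Type u} [Category.{v} C] [Abelian C] (T F : C → Prop) : Prop where
  isoClosed_torsion : ∀ {X Y : C}, (X ≅ Y) → T X → T Y
  isoClosed_free : ∀ {X Y : C}, (X ≅ Y) → F X → F Y
  hom_eq_zero : ∀ {X Y : C}, T X → F Y → ∀ f : X ⟶ Y, f = 0
  exists_ses : ∀ X : C, ∃ (TX FX : C) (i : TX ⟶ X) (p : X ⟶ FX) (w : i ≫ p = 0),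
      T TX ∧ F FX ∧ (ShortComplex.mk i p w).ShortExact

variable {C : Type u} [Category.{v} C] [Abelian C]

/-- `X` is `V`-generated: there is an epimorphism `V^{(I)} ↠ X` for some set `I`. -/
def Gen (V : C) [∀ I : Type v, HasCoproduct (fun _ : I => V)] (X : C) : Prop :=
  ∃ (I : Type v) (p : (∐ (fun _ : I => V)) ⟶ X), Epi p

/-- `Ext¹(V, X) = 0`, expressed elementwise: every short exact sequence
`0 → X → E → V → 0` splits. -/
def ext1Zero (V X : C) : Prop :=
  ∀ (E : C) (a : X ⟶ E) (b : E ⟶ V) (w : a ≫ b = 0),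
    (ShortComplex.mk a b w).ShortExact → ∃ s : V ⟶ E, s ≫ b = 𝟙 V

/-- The canonical evaluation morphism `ε_A : V^{(Hom(V,A))} → A`. -/
noncomputable def eval (V : C) [∀ I : Type v, HasCoproduct (fun _ : I => V)] (A : C) :
    (∐ (fun _ : (V ⟶ A) => V)) ⟶ A :=
  Sigma.desc fun f => f

omit [Abelian C] in
lemma gen_of_iso {V X Y : C} [∀ I : Type v, HasCoproduct (fun _ : I => V)] (e : X ≅ Y)
    (hX : Gen V X) : Gen V Y :=
  let ⟨I, p, _⟩ := hX
  ⟨I, p ≫ e.hom, epi_comp _ _⟩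

lemma hom_eq_zero_of_iso {V X Y : C} (e : X ≅ Y) (hX : ∀ f : V ⟶ X, f = 0) (f : V ⟶ Y) :
    f = 0 := by
  rw [← Category.comp_id f, ← e.inv_hom_id, ← Category.assoc, hX (f ≫ e.inv), zero_comp]

lemma Gen.hom_eq_zero {V X Y : C} [∀ I : Type v, HasCoproduct (fun _ : I => V)]
    (hX : Gen V X) (hY : ∀ f : V ⟶ Y, f = 0) (g : X ⟶ Y) : g = 0 := by
  obtain ⟨I, p, _⟩ := hX
  rw [← cancel_epi p, comp_zero]
  exact Sigma.hom_ext _ _ fun i => by rw [comp_zero, ← Category.assoc]; exact hY _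

lemma gen_image_eval (V A : C) [∀ I : Type v, HasCoproduct (fun _ : I => V)] :
    Gen V (image (eval V A)) :=
  ⟨V ⟶ A, factorThruImage (eval V A), inferInstance⟩

lemma comp_cokernel_π_image_eval_eq_zero {V A : C} [∀ I : Type v, HasCoproduct (fun _ : I => V)]
    (g : V ⟶ A) : g ≫ cokernel.π (image.ι (eval V A)) = 0 := by
  have hg : (Sigma.ι (fun _ : (V ⟶ A) => V) g ≫ factorThruImage (eval V A)) ≫
      image.ι (eval V A) = g := by
    rw [Category.assoc, image.fac, eval, Sigma.ι_desc]
  rw [← hg, Category.assoc, cokernel.condition, comp_zero]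

lemma shortExact_cokernel_π {X Y : C} (f : X ⟶ Y) [Mono f] :
    (ShortComplex.mk f (cokernel.π f) (cokernel.condition f)).ShortExact :=
  { exact := ShortComplex.cokernelSequence_exact f }

lemma _root_.CategoryTheory.ShortComplex.ShortExact.pullback {S : ShortComplex C}
    (hS : S.ShortExact) {W : C} (f : W ⟶ S.X₃) :
    (ShortComplex.mk (pullback.lift S.f 0 (by simp)) (pullback.snd S.g f)
      (pullback.lift_snd _ _ _)).ShortExact := by
  have := hS.mono_f
  have := hS.epi_g
  set ι : S.X₁ ⟶ Limits.pullback S.g f := pullback.lift S.f 0 (by simp)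
  have hι : ι ≫ pullback.fst S.g f = S.f := pullback.lift_fst _ _ _
  have : Mono ι := mono_of_mono_fac hι
  have hker : IsLimit (KernelFork.ofι ι (pullback.lift_snd _ _ _)) := by
    refine KernelFork.IsLimit.ofι _ _ (fun u hu => hS.exact.lift (u ≫ pullback.fst S.g f) ?_)
      (fun u hu => ?_) (fun u hu m hm => ?_)
    · rw [Category.assoc, pullback.condition, ← Category.assoc, hu, zero_comp]
    · refine pullback.hom_ext ?_ ?_
      · rw [Category.assoc, hι, hS.exact.lift_f]
      · rw [Category.assoc, pullback.lift_snd, comp_zero, hu]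
    · rw [← cancel_mono S.f, hS.exact.lift_f, ← hm, Category.assoc, hι]
  exact { exact := ShortComplex.exact_of_f_is_kernel _ hker }

lemma hom_cokernel_image_eval_eq_zero {V A : C} [∀ I : Type v, HasCoproduct (fun _ : I => V)]
    (hV : ext1Zero V (image (eval V A))) (f : V ⟶ cokernel (image.ι (eval V A))) : f = 0 := by
  have hS := shortExact_cokernel_π (image.ι (eval V A))
  obtain ⟨s, hs⟩ := hV _ _ _ _ (hS.pullback f)
  have hlift : (s ≫ pullback.fst _ f) ≫ cokernel.π (image.ι (eval V A)) = f := by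
    rw [Category.assoc, pullback.condition, ← Category.assoc, hs, Category.id_comp]
  rw [← hlift, comp_cokernel_π_image_eval_eq_zero]

/-- if all coproducts of copies of `V` exist and
`Gen(V) ⊆ Ker(Ext¹(V,−))`, then `(Gen(V), V^⊥)` is a torsion pair, with the trace
`tr_V(A)` (the image of the canonical map `V^{(Hom(V,A))} → A`) as the torsion
subobject of each object `A`. -/
theorem statement6 (V : C) [∀ I : Type v, HasCoproduct (fun _ : I => V)]
    (h : ∀ X : C, Gen V X → ext1Zero V X) :
    TorsionPair (Gen V) (fun Y => ∀ f : V ⟶ Y, f = 0) ∧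
    ∀ A : C, Gen V (image (eval V A)) ∧
      ∀ f : V ⟶ cokernel (image.ι (eval V A)), f = 0 := by
  have trace_perp (A : C) := hom_cokernel_image_eval_eq_zero (h _ (gen_image_eval V A))
  refine ⟨⟨gen_of_iso, hom_eq_zero_of_iso, Gen.hom_eq_zero, fun A => ?_⟩,
    fun A => ⟨gen_image_eval V A, trace_perp A⟩⟩
  exact ⟨_, _, _, _, _, gen_image_eval V A, trace_perp A,
    shortExact_cokernel_π (image.ι (eval V A))⟩

end Paper
end

section
/- Let A be an abelian category and V a quasi-tilting object of A (i.e. all coproducts of copies of V exist and Gen(V) = sub-Gen(V) ∩ Ker(Ext^1_A(V,−))). Then Gen(V) = Pres(V). -/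
open CategoryTheory CategoryTheory.Limits

universe v u

namespace Paper

variable {C : Type u} [Category.{v} C] [Abelian C]

/-- `X` is `V`-presented: there is an exact sequence `V^{(J)} → V^{(I)} → X → 0`. -/
def Pres (V : C) [∀ I : Type v, HasCoproduct (fun _ : I => V)] (X : C) : Prop :=
  ∃ (I J : Type v) (g : (∐ (fun _ : J => V)) ⟶ (∐ (fun _ : I => V)))
    (p : (∐ (fun _ : I => V)) ⟶ X) (w : g ≫ p = 0),
      Epi p ∧ (ShortComplex.mk g p w).Exact

/-- `X` is `V`-subgenerated: `X` is (isomorphic to) a subobject of a `V`-generated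
object. -/
def SubGen (V : C) [∀ I : Type v, HasCoproduct (fun _ : I => V)] (X : C) : Prop :=
  ∃ Y : C, Gen V Y ∧ ∃ i : X ⟶ Y, Mono i

end Paper

/-!
Clearly `Pres(V) ⊆ Gen(V)`. Conversely, for `X ∈ Gen(V)` the canonical map
`p : V^{(Hom(V, X))} → X` is an epimorphism, and every morphism `V → X` lifts along it.
Its kernel `K` lies in `sub-Gen(V)`, and `Ext¹(V, K) = 0`: pushing an extension
`0 → K → E → V → 0` out along `K → V^{(Hom(V, X))}` gives an extension of `V` by an object of
`Gen(V)`, which splits; subtracting a lift along `p` of the induced map `V → X` turns the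
splitting into a section of `E → V`. Hence `K ∈ Gen(V)` by quasi-tilting, and an epimorphism
`V^{(I)} → K` completes a `V`-presentation of `X`.
-/

namespace Paper

section

variable {C : Type u} [Category.{v} C]

noncomputable def isColimitCokernelCoforkOfIsPushout [HasZeroMorphisms C] {X₁ X₂ X₃ X₄ M : C}
    {t : X₁ ⟶ X₂} {l : X₁ ⟶ X₃} {r : X₂ ⟶ X₄} {b : X₃ ⟶ X₄} (h : IsPushout t l r b)
    {c : X₂ ⟶ M} (w : t ≫ c = 0) (hc : IsColimit (CokernelCofork.ofπ c w)) :
    IsColimit (CokernelCofork.ofπ (h.desc c 0 (by rw [w, comp_zero])) (h.inr_desc _ _ _)) :=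
  have : Epi c := epi_of_isColimit_cofork hc
  have : Epi (h.desc c 0 (by rw [w, comp_zero])) := epi_of_epi_fac (h.inl_desc _ _ _)
  CokernelCofork.IsColimit.ofπ' _ _ fun k hk =>
    let l' := CokernelCofork.IsColimit.desc' hc (r ≫ k) (by rw [← Category.assoc, h.w,
      Category.assoc, hk, comp_zero])
    ⟨l'.1, h.hom_ext (by rw [h.inl_desc_assoc]; exact l'.2)
      (by rw [h.inr_desc_assoc, zero_comp, hk])⟩

theorem Gen.epi_sigmaDesc {V X : C} [∀ I : Type v, HasCoproduct (fun _ : I => V)]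
    (hX : Gen V X) : Epi (Sigma.desc fun f : V ⟶ X => f) := by
  obtain ⟨I, p, hp⟩ := hX
  have hfac : Sigma.desc (fun i => Sigma.ι (fun _ : V ⟶ X => V) (Sigma.ι (fun _ : I => V) i ≫ p))
      ≫ Sigma.desc (fun f : V ⟶ X => f) = p :=
    Sigma.hom_ext _ _ fun i => by simp
  exact epi_of_epi_fac hfac

end

variable {C : Type u} [Category.{v} C] [Abelian C]

theorem ext1Zero_X₁_of_shortExact {V : C} {S : ShortComplex C} (hS : S.ShortExact)
    (hX₂ : ext1Zero V S.X₂) (hlift : ∀ f : V ⟶ S.X₃, ∃ g : V ⟶ S.X₂, g ≫ S.g = f) :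
    ext1Zero V S.X₁ := by
  intro E a b wab hE
  have := hS.mono_f
  have := hS.epi_g
  have := hE.mono_f
  let h := IsPushout.of_hasPushout S.f a
  let b' := h.flip.desc b 0 (by rw [wab, comp_zero])
  let q := h.desc S.g 0 (by rw [S.zero, comp_zero])
  have hb'_coker := isColimitCokernelCoforkOfIsPushout h.flip wab hE.gIsCokernel
  have : Epi b' := epi_of_isColimit_cofork hb'_coker
  have hb' :
      (ShortComplex.mk _ _ (h.flip.inr_desc _ _ _ : pushout.inl S.f a ≫ b' = 0)).ShortExact :=
    ⟨ShortComplex.exact_of_g_is_cokernel _ hb'_coker⟩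
  have hq : (ShortComplex.mk _ _ (h.inr_desc _ _ _ : pushout.inr S.f a ≫ q = 0)).Exact :=
    ShortComplex.exact_of_g_is_cokernel _
      (isColimitCokernelCoforkOfIsPushout h S.zero hS.gIsCokernel)
  obtain ⟨s, hs⟩ := hX₂ _ _ _ _ hb'
  obtain ⟨g, hg⟩ := hlift (s ≫ q)
  obtain ⟨σ, hσ⟩ := hq.lift' (s - g ≫ pushout.inl S.f a) (by
    rw [Preadditive.sub_comp, Category.assoc, h.inl_desc, hg, sub_self])
  refine ⟨σ, ?_⟩
  calc σ ≫ b = σ ≫ pushout.inr S.f a ≫ b' := by rw [h.flip.inl_desc]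
    _ = 𝟙 V := by
      rw [reassoc_of% hσ, Preadditive.sub_comp, Category.assoc, hs, h.flip.inr_desc, comp_zero,
        sub_zero]

theorem Pres.gen {V X : C} [∀ I : Type v, HasCoproduct (fun _ : I => V)] (hX : Pres V X) :
    Gen V X :=
  let ⟨I, _, _, p, _, hp, _⟩ := hX
  ⟨I, p, hp⟩

theorem pres_of_gen_kernel {V X : C} [∀ I : Type v, HasCoproduct (fun _ : I => V)] {J : Type v}
    (p : (∐ fun _ : J => V) ⟶ X) [Epi p] (hK : Gen V (kernel p)) : Pres V X := by
  obtain ⟨I, e, he⟩ := hK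
  refine ⟨J, I, e ≫ kernel.ι p, p, by simp, inferInstance, ?_⟩
  rw [ShortComplex.exact_iff_epi_kernel_lift]
  convert he
  exact (cancel_mono (kernel.ι p)).1 (by simp)

/-- for a quasi-tilting object `V`
(`Gen(V) = sub-Gen(V) ∩ Ker Ext¹(V,−)`), one has `Gen(V) = Pres(V)`. -/
theorem statement7 (V : C) [∀ I : Type v, HasCoproduct (fun _ : I => V)]
    (hqt : ∀ X : C, Gen V X ↔ (SubGen V X ∧ ext1Zero V X)) :
    ∀ X : C, Gen V X ↔ Pres V X := by
  intro X
  refine ⟨fun hX => ?_, Pres.gen⟩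
  let p := Sigma.desc fun f : V ⟶ X => f
  have : Epi p := hX.epi_sigmaDesc
  have : Epi (ShortComplex.kernelSequence p).g := ‹Epi p›
  have hgen : Gen V (∐ fun _ : V ⟶ X => V) := ⟨_, 𝟙 _, inferInstance⟩
  have hK : ext1Zero V (kernel p) :=
    ext1Zero_X₁_of_shortExact (S := ShortComplex.kernelSequence p)
      ⟨ShortComplex.kernelSequence_exact p⟩ ((hqt _).1 hgen).2
      fun f => ⟨_, Sigma.ι_desc (fun f : V ⟶ X => f) f⟩
  exact pres_of_gen_kernel p ((hqt _).2 ⟨⟨_, hgen, kernel.ι p, inferInstance⟩, hK⟩)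

end Paper
end

section
/- Let A be an abelian category and V a 1-tilting object of A, i.e. all coproducts of copies of V exist, Gen(V) = Ker(Ext^1_A(V,−)), and Gen(V) is a cogenerating class in A. Then Ext^2_A(V, M) = 0 for every object M of A (V has projective dimension at most 1). -/
/-!
`Ext^{n+1}(X, -)` is effaceable in any abelian category. A class in `Ext^{n+1}(X, M)` is a roof
`X[0] ← K → M[n+1]` with `K` exact in degree `-(n+1)`; pushing `M` out along the monomorphism
`coker(d) ↪ K^{-n}` makes the cocycle `K^{-(n+1)} → M` factor through the differential, hence
null-homotopic. Embedding the resulting `M ↪ X` further into some `T ∈ Gen V`, the quotient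
`T/M` lies in `Gen V`, so `Ext¹(V, T/M) = 0`, and the long exact sequence of
`0 → M → T → T/M → 0` shows that a class of `Ext²(V, M)` dying in `Ext²(V, T)` is zero.
-/

open CategoryTheory CategoryTheory.Limits CategoryTheory.Abelian

universe w v u

section

variable {C : Type u} [Category.{v} C] [Abelian C]

lemma CategoryTheory.ShortComplex.Exact.exists_mono_comp_eq_g_comp {S : ShortComplex C}
    (hS : S.Exact) {M : C} (b : S.X₂ ⟶ M) (hb : S.f ≫ b = 0) :
    ∃ (P : C) (m : M ⟶ P) (h : S.X₃ ⟶ P), Mono m ∧ b ≫ m = S.g ≫ h := by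
  have := hS.mono_fromOpcycles
  refine ⟨pushout (S.descOpcycles b hb) S.fromOpcycles, pushout.inl _ _, pushout.inr _ _,
    Abelian.mono_pushout_of_mono_g _ _, ?_⟩
  calc b ≫ pushout.inl _ _ = S.pOpcycles ≫ S.descOpcycles b hb ≫ pushout.inl _ _ := by
        rw [S.p_descOpcycles_assoc]
    _ = S.pOpcycles ≫ S.fromOpcycles ≫ pushout.inr _ _ := by rw [pushout.condition]
    _ = S.g ≫ pushout.inr _ _ := S.p_fromOpcycles_assoc _

open HomologicalComplex in
noncomputable def CochainComplex.nullHomotopyToSingle {K : CochainComplex C ℤ} {n : ℤ} {M : C}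
    (g : K ⟶ (single C (ComplexShape.up ℤ) n).obj M) (h : K.X (n + 1) ⟶ M)
    (hg : g.f n ≫ (singleObjXSelf _ n M).hom = K.d n (n + 1) ≫ h) :
    Homotopy g 0 := by
  let hom : ∀ i j, (ComplexShape.up ℤ).Rel j i →
      (K.X i ⟶ ((single C (.up ℤ) n).obj M).X j) := fun i j hij =>
    if hj : j = n then
      (K.XIsoOfEq (by simp at hij; omega : i = n + 1)).hom ≫ h ≫
        (singleObjXIsoOfEq _ n M j hj).inv
    else 0
  refine (Homotopy.ofEq ?_).trans (Homotopy.nullHomotopy' hom)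
  ext
  rw [Homotopy.nullHomotopicMap'_f (c := ComplexShape.up ℤ) (k₂ := n - 1) (by simp) rfl]
  simpa [hom, singleObjXSelf] using (Iso.eq_comp_inv _).mpr hg

open DerivedCategory HomologicalComplex in
lemma DerivedCategory.exists_mono_comp_singleFunctor_map_eq_zero [HasDerivedCategory.{w} C]
    {K : CochainComplex C ℤ} {n : ℤ} (hK : K.ExactAt n) {M : C}
    (φ : Q.obj K ⟶ (singleFunctor C n).obj M) :
    ∃ (P : C) (m : M ⟶ P), Mono m ∧ φ ≫ (singleFunctor C n).map m = 0 := by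
  obtain ⟨K', s, hs, g, rfl⟩ :=
    right_fac (Y := (single C (ComplexShape.up ℤ) n).obj M) φ
  have : QuasiIso s := (isIso_Q_map_iff_quasiIso C s).1 hs
  have hK' : (K'.sc' (n - 1) n (n + 1)).Exact := by
    rw [← K'.exactAt_iff' _ _ _ (by simp) (by simp), exactAt_iff_of_quasiIsoAt s n]
    exact hK
  have hcocycle : K'.d (n - 1) n ≫ g.f n ≫ (singleObjXSelf _ n M).hom = 0 := by
    rw [← g.comm_assoc]
    simp
  obtain ⟨P, m, h, hm, hmh⟩ := hK'.exists_mono_comp_eq_g_comp _ hcocycle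
  refine ⟨P, m, hm, ?_⟩
  have hgm : Q.map (g ≫ (single C _ n).map m) = 0 := by
    refine (Q_map_eq_of_homotopy C (CochainComplex.nullHomotopyToSingle _ h ?_)).trans
      (Q.map_zero _ _)
    simp only [comp_f, single_map_f_self, Category.assoc, Iso.inv_hom_id, Category.comp_id]
    exact (Category.assoc _ _ _).symm.trans hmh
  change _ ≫ Q.map ((single C _ n).map m) = 0
  rw [Category.assoc, ← Q.map_comp, hgm, comp_zero]

lemma CategoryTheory.Abelian.Ext.exists_mono_comp_mk₀_eq_zero [HasExt.{w} C] {X M : C} {n : ℕ}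
    (e : Ext X M (n + 1)) :
    ∃ (P : C) (m : M ⟶ P), Mono m ∧ e.comp (Ext.mk₀ m) (add_zero _) = 0 := by
  let := HasDerivedCategory.standard C
  let σ := (DerivedCategory.singleFunctors C).shiftIso ((n + 1 : ℕ) : ℤ) (-(n + 1 : ℕ)) 0
    (by omega)
  obtain ⟨P, m, hm, hφ⟩ := DerivedCategory.exists_mono_comp_singleFunctor_map_eq_zero
    (K := (HomologicalComplex.single C (ComplexShape.up ℤ) 0).obj X)
    (HomologicalComplex.exactAt_single_obj _ _ _ _ (by omega)) (e.hom ≫ σ.hom.app M)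
  refine ⟨P, m, hm, Ext.ext ?_⟩
  rw [Ext.zero_hom, ← Ext.hom_comp_singleFunctor_map_shift, ← cancel_mono (σ.hom.app P),
    Category.assoc, Limits.zero_comp]
  exact (congrArg (e.hom ≫ ·) (σ.hom.naturality m)).trans
    ((Category.assoc _ _ _).symm.trans hφ)

lemma CategoryTheory.Abelian.Ext.eq_zero_of_comp_mk₀_eq_zero [HasExt.{w} C]
    {S : ShortComplex C} (hS : S.ShortExact) {X : C} {n : ℕ} [Subsingleton (Ext X S.X₃ n)]
    (e : Ext X S.X₁ (n + 1)) (he : e.comp (Ext.mk₀ S.f) (add_zero _) = 0) : e = 0 := by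
  obtain ⟨x, rfl⟩ := Ext.covariant_sequence_exact₁ X hS e he rfl
  rw [Subsingleton.elim x 0, Ext.zero_comp]

end

namespace Paper

variable {C : Type u} [Category.{v} C] [Abelian C]

/-- if `V` is a 1-tilting object (all coproducts of copies of `V` exist,
`Gen(V) = Ker Ext¹(V,−)`, and `Gen(V)` is cogenerating), then `Ext²(V, M) = 0` for
every object `M`, i.e. `V` has projective dimension at most `1`. -/
theorem statement8 [HasExt.{w} C] (V : C) [∀ I : Type v, HasCoproduct (fun _ : I => V)]
    (htilt : ∀ X : C, Gen V X ↔ Subsingleton (Ext V X 1))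
    (hcogen : ∀ X : C, ∃ (T : C) (i : X ⟶ T), Gen V T ∧ Mono i) :
    ∀ M : C, Subsingleton (Ext V M 2) := by
  intro M
  refine subsingleton_of_forall_eq 0 fun e => ?_
  obtain ⟨X, m, hm, hme⟩ := Ext.exists_mono_comp_mk₀_eq_zero (n := 1) e
  obtain ⟨T, i, hT, hi⟩ := hcogen X
  have hS : (ShortComplex.cokernelSequence (m ≫ i)).ShortExact :=
    { exact := ShortComplex.cokernelSequence_exact _, mono_f := mono_comp m i }
  have hcoker : Gen V (cokernel (m ≫ i)) := by
    obtain ⟨I, p, _⟩ := hT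
    exact ⟨I, p ≫ cokernel.π (m ≫ i), inferInstance⟩
  have : Subsingleton (Ext V (ShortComplex.cokernelSequence (m ≫ i)).X₃ 1) := (htilt _).1 hcoker
  have he : e.comp (Ext.mk₀ (m ≫ i)) (add_zero 2) = 0 := by
    rw [← Ext.mk₀_comp_mk₀, ← Ext.comp_assoc_of_third_deg_zero, hme, Ext.zero_comp]
  exact Ext.eq_zero_of_comp_mk₀_eq_zero hS e he

end Paper
end

section
/- Let A be an AB3 abelian category with a set P_0 of projective generators that is self-small (for each P ∈ P_0 and each family (P_λ) in P_0, the canonical map ∐_λ Hom(P, P_λ) → Hom(P, ∐_λ P_λ) is an isomorphism). Then every object of P_0 is a compact (small) object of A, i.e. Hom(P, −) preserves all set-indexed coproducts. -/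
/-!
Injectivity holds for any object: the projections `∐ A ⟶ A j` recover the components.
For surjectivity, cover each `A j` by a coproduct of generators; the combined map
`∐_{(j,k)} P_{g j k} ⟶ ∐ A` is epi, so `f : P ⟶ ∐ A` lifts through it by projectivity of `P`.
Self-smallness writes the lift as a finite sum of maps into single summands, and pushing
these forward gives a preimage of `f`.
-/

open CategoryTheory CategoryTheory.Limits DirectSum

universe v u

namespace Paper

variable {C : Type u} [Category.{v} C] [Abelian C]

/-- The canonical map `∐_j Hom(P, A j) → Hom(P, ∐_j A j)` (the source being the direct
sum of abelian groups), sending a finitely supported family `(f_j)` to `∑ f_j ≫ ι_j`. -/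
noncomputable def coprodHomMap (P : C) {J : Type v} [DecidableEq J] (A : J → C)
    [HasCoproduct A] : (DirectSum J (fun j => (P ⟶ A j))) →+ (P ⟶ ∐ A) :=
  DirectSum.toAddMonoid fun j =>
    AddMonoidHom.mk' (fun f => f ≫ Sigma.ι A j) (fun f g => by
      simp [Preadditive.add_comp])

section

variable (P : C) {J : Type v} [DecidableEq J] (A : J → C) [HasCoproduct A]

@[simp]
lemma coprodHomMap_of (j : J) (f : P ⟶ A j) :
    coprodHomMap P A (of _ j f) = f ≫ Sigma.ι A j := by
  simp [coprodHomMap]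

@[simp]
lemma coprodHomMap_comp_π (d : ⨁ j, P ⟶ A j) (j : J) :
    coprodHomMap P A d ≫ Sigma.π A j = d j := by
  induction d using DirectSum.induction_on with
  | zero => simp
  | of l f =>
    by_cases hl : l = j
    · subst hl
      simp
    · rw [coprodHomMap_of, Category.assoc, Sigma.ι_π_of_ne A hl, of_eq_of_ne _ _ _ (Ne.symm hl),
        comp_zero]
  | add x y hx hy => simp [Preadditive.add_comp, hx, hy]

lemma coprodHomMap_injective : Function.Injective (coprodHomMap P A) := by
  intro d d' h
  ext j
  simpa using congrArg (· ≫ Sigma.π A j) h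

end

section

variable (P : C) {J L : Type v} [DecidableEq J] [DecidableEq L] {A : J → C} {Q : L → C}
  [HasCoproduct A] [HasCoproduct Q] (σ : L → J) (φ : ∀ l, Q l ⟶ A (σ l))

noncomputable def homSumMap : (⨁ l, P ⟶ Q l) →+ (⨁ j, P ⟶ A j) :=
  toAddMonoid fun l => (of (fun j => P ⟶ A j) (σ l)).comp (Preadditive.rightComp P (φ l))

lemma coprodHomMap_homSumMap (d : ⨁ l, P ⟶ Q l) :
    coprodHomMap P A (homSumMap P σ φ d) = coprodHomMap P Q d ≫ Sigma.map' σ φ := by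
  induction d using DirectSum.induction_on with
  | zero => simp
  | of l f => simp [homSumMap, Preadditive.rightComp]
  | add x y hx hy => simp [Preadditive.add_comp, hx, hy]

lemma coprodHomMap_surjective_of_epi [Projective P] [Epi (Sigma.map' σ φ)]
    (hQ : Function.Surjective (coprodHomMap P Q)) :
    Function.Surjective (coprodHomMap P A) := by
  intro f
  obtain ⟨d, hd⟩ := hQ (Projective.factorThru f (Sigma.map' σ φ))
  exact ⟨homSumMap P σ φ d, by rw [coprodHomMap_homSumMap, hd, Projective.factorThru_comp]⟩

end

lemma epi_sigmaMap'_fst {D : Type u} [Category.{v} D] [HasCoproducts.{v} D] {J : Type v}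
    {K : J → Type v} (F : ∀ j, K j → D) {A : J → D} (p : ∀ j, ∐ F j ⟶ A j) [∀ j, Epi (p j)] :
    Epi (Sigma.map' (f := fun l : Σ j, K j => F l.1 l.2) Sigma.fst
      fun l => Sigma.ι (F l.1) l.2 ≫ p l.1) := by
  have : Sigma.map' (f := fun l : Σ j, K j => F l.1 l.2) Sigma.fst
      (fun l => Sigma.ι (F l.1) l.2 ≫ p l.1) = (sigmaSigmaIso K F).inv ≫ Limits.Sigma.map p := by
    ext ⟨j, k⟩
    simp
  rw [this]
  infer_instance

/-- in an AB3 abelian category, each member of a self-small set of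
projective generators is a compact (small) object: `Hom(P, −)` preserves all
set-indexed coproducts. -/
theorem statement11 [HasCoproducts.{v} C] (ι : Type v) (P : ι → C)
    (hproj : ∀ i, Projective (P i))
    (hgen : ∀ X : C, ∃ (J : Type v) (g : J → ι) (p : (∐ fun j => P (g j)) ⟶ X), Epi p)
    (hss : ∀ (i : ι) (J : Type v) [DecidableEq J] (g : J → ι),
      Function.Bijective (coprodHomMap (P i) (fun j => P (g j)))) :
    ∀ (i : ι) (J : Type v) [DecidableEq J] (A : J → C),
      Function.Bijective (coprodHomMap (P i) A) := by
  intro i J _ A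
  classical
  refine ⟨coprodHomMap_injective (P i) A, ?_⟩
  choose K g p hp using fun j => hgen (A j)
  have := epi_sigmaMap'_fst (fun j k => P (g j k)) p
  exact coprodHomMap_surjective_of_epi (P i) Sigma.fst
    (fun l => Sigma.ι (fun k => P (g l.1 k)) l.2 ≫ p l.1)
    (hss i _ fun l : Σ j, K j => g l.1 l.2).2

end Paper
end

section
/- Let A be an abelian category and Y an object of A such that all set-indexed products Y^I exist and such that all set-indexed coproducts Y^{(I)} exist. Then Y is pure-injective (for every nonempty set I there is φ : Y^I → Y with φ ∘ ι_j = 1_Y for all j, where ι_j is the j-th injection into the product) if and only if for every set I the summation map s_Y : Y^{(I)} → Y factors through the canonical morphism κ_Y : Y^{(I)} → Y^I. -/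
open CategoryTheory CategoryTheory.Limits

universe v u

namespace Paper

variable {C : Type u} [Category.{v} C] [Abelian C]

/-- The `j`-th "injection into the product" `ι_j : Y → Y^I`, determined by
`π_i ∘ ι_j = δ_{ij} · 1_Y`. -/
noncomputable def prodIota (Y : C) {I : Type v} [DecidableEq I]
    [HasProduct (fun _ : I => Y)] (j : I) : Y ⟶ ∏ᶜ (fun _ : I => Y) :=
  Pi.lift fun i => if i = j then 𝟙 Y else 0

/-- The canonical morphism `κ_Y : Y^{(I)} → Y^I`, determined by
`π_k ∘ κ_Y ∘ λ_j = δ_{jk} · 1_Y`. -/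
noncomputable def kappa (Y : C) (I : Type v) [DecidableEq I]
    [HasProduct (fun _ : I => Y)] [HasCoproduct (fun _ : I => Y)] :
    (∐ (fun _ : I => Y)) ⟶ ∏ᶜ (fun _ : I => Y) :=
  Sigma.desc fun j => prodIota Y j

/-- The summation map `s_Y : Y^{(I)} → Y`, with `s_Y ∘ λ_j = 1_Y` for all `j`. -/
noncomputable def summation (Y : C) (I : Type v) [HasCoproduct (fun _ : I => Y)] :
    (∐ (fun _ : I => Y)) ⟶ Y :=
  Sigma.desc fun _ => 𝟙 Y

theorem ι_kappa (Y : C) {I : Type v} [DecidableEq I] [HasProduct (fun _ : I => Y)]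
    [HasCoproduct (fun _ : I => Y)] (j : I) :
    Sigma.ι (fun _ : I => Y) j ≫ kappa Y I = prodIota Y j :=
  Sigma.ι_desc _ j

theorem ι_summation {D : Type u} [Category.{v} D] (Y : D) {I : Type v} [HasCoproduct (fun _ : I => Y)] (j : I) :
    Sigma.ι (fun _ : I => Y) j ≫ summation Y I = 𝟙 Y :=
  Sigma.ι_desc _ j

theorem kappa_comp_eq_summation_iff (Y : C) {I : Type v} [DecidableEq I]
    [HasProduct (fun _ : I => Y)] [HasCoproduct (fun _ : I => Y)]
    (ψ : (∏ᶜ (fun _ : I => Y)) ⟶ Y) :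
    kappa Y I ≫ ψ = summation Y I ↔ ∀ j : I, prodIota Y j ≫ ψ = 𝟙 Y := by
  constructor
  · intro h j
    simpa only [← Category.assoc, ι_kappa, ι_summation] using Sigma.ι (fun _ : I => Y) j ≫= h
  · intro h
    ext j
    rw [← Category.assoc, ι_kappa, ι_summation, h j]

/-- `Y` is pure-injective (for every nonempty set `I` there is
`φ : Y^I → Y` with `φ ∘ ι_j = 1_Y` for all `j`) if and only if for every set `I` the
summation map `s_Y : Y^{(I)} → Y` factors through `κ_Y : Y^{(I)} → Y^I`. -/
theorem statement13 (Y : C) [∀ I : Type v, HasProduct (fun _ : I => Y)]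
    [∀ I : Type v, HasCoproduct (fun _ : I => Y)] :
    (∀ (I : Type v) [DecidableEq I], Nonempty I →
      ∃ φ : (∏ᶜ (fun _ : I => Y)) ⟶ Y, ∀ j : I, prodIota Y j ≫ φ = 𝟙 Y) ↔
    (∀ (I : Type v) [DecidableEq I],
      ∃ ψ : (∏ᶜ (fun _ : I => Y)) ⟶ Y, kappa Y I ≫ ψ = summation Y I) := by
  refine ⟨fun h I _ => ?_, fun h I _ _ => ?_⟩
  · by_cases hI : Nonempty I
    · obtain ⟨φ, hφ⟩ := h I hI
      exact ⟨φ, (kappa_comp_eq_summation_iff Y φ).2 hφ⟩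
    · exact ⟨0, (kappa_comp_eq_summation_iff Y 0).2 fun j => (hI ⟨j⟩).elim⟩
  · obtain ⟨ψ, hψ⟩ := h I
    exact ⟨ψ, (kappa_comp_eq_summation_iff Y ψ).1 hψ⟩

end Paper
end

section
/- Let A be an AB3* abelian category with an injective cogenerator. Then A is also AB3 (cocomplete), and moreover AB4: coproducts of short exact sequences are exact. -/
/-!
An injective cogenerator `E` is a coseparator, so the category is well-powered (in an abelian
category subobjects and quotients correspond, and a separator of `Cᵒᵖ` makes `Cᵒᵖ`
well-powered), and the special adjoint functor theorem turns completeness into cocompleteness.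
Exactness of coproducts reduces to coproducts preserving monomorphisms. For a family of monos
`fᵢ : Xᵢ ⟶ Yᵢ`, every map `∐ Xᵢ ⟶ E` extends componentwise along the `fᵢ` by injectivity of `E`,
so `∐ fᵢ` is detected as a mono by maps into the coseparator `E`.
-/

open CategoryTheory CategoryTheory.Limits

universe v u

namespace Paper

variable {C : Type u} [Category.{v} C]

lemma isCoseparator_of_injective [Abelian C] {E : C} [Injective E]
    (hcogen : ∀ X : C, (∀ f : X ⟶ E, f = 0) → IsZero X) : IsCoseparator E := by
  rw [Preadditive.isCoseparator_iff]
  intro X Y f hf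
  have himage : IsZero (image f) := hcogen _ fun g => by
    have hg : factorThruImage f ≫ g = 0 := by
      rw [← Injective.comp_factorThru g (image.ι f), image.fac_assoc]
      exact hf _
    exact (cancel_epi (factorThruImage f)).1 (by rw [hg, comp_zero])
  rw [← image.fac f, himage.eq_zero_of_src (image.ι f), comp_zero]

lemma wellPowered_of_isCoseparator [Abelian C] {E : C} (hE : IsCoseparator E) :
    WellPowered.{v} C := by
  have : WellPowered.{v} Cᵒᵖ := wellPowered_of_isSeparator _ ((isSeparator_op_iff E).2 hE)
  exact wellPowered_of_equiv.{v} (opOpEquivalence C)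

lemma exists_colimMap_comp_eq_of_injective {α : Type*} [HasColimitsOfShape (Discrete α) C]
    {X Y : Discrete α ⥤ C} (f : X ⟶ Y) [∀ i, Mono (f.app i)] {I : C} [Injective I]
    (q : colimit X ⟶ I) : ∃ k : colimit Y ⟶ I, colim.map f ≫ k = q := by
  refine ⟨colimit.desc Y
    ⟨I, Discrete.natTrans fun i => Injective.factorThru (J := I) (colimit.ι X i ≫ q) (f.app i)⟩,
    colimit.hom_ext fun i => ?_⟩
  simp

lemma preservesMonomorphisms_colim_discrete [HasPullbacks C] {α : Type*}
    [HasColimitsOfShape (Discrete α) C]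
    {E : C} [Injective E] (hE : IsCoseparator E) :
    (colim : (Discrete α ⥤ C) ⥤ C).PreservesMonomorphisms where
  preserves {X Y} f _ := ⟨fun g h hgh => hE.def g h fun q => by
    obtain ⟨k, rfl⟩ := exists_colimMap_comp_eq_of_injective f q
    simp only [← Category.assoc, hgh]⟩

/-- an AB3* abelian category with an injective cogenerator is AB3
(cocomplete for set-indexed coproducts) and moreover AB4 (coproducts are exact). -/
theorem statement14 (C : Type u) [Category.{v} C] [Abelian C] [HasProducts.{v} C]
    (E : C) (hinj : Injective E)
    (hcogen : ∀ X : C, (∀ f : X ⟶ E, f = 0) → IsZero X) :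
    ∃ h : HasCoproducts.{v} C, @AB4 C _ h := by
  have hE : IsCoseparator E := isCoseparator_of_injective hcogen
  have : WellPowered.{v} C := wellPowered_of_isCoseparator hE
  have : HasLimits C := has_limits_of_hasEqualizers_and_products
  have : HasColimits C := hasColimits_of_hasLimits_of_isCoseparating hE
  refine ⟨inferInstance, ⟨fun α => ?_⟩⟩
  have := preservesMonomorphisms_colim_discrete (α := α) hE
  exact hasExactColimitsOfShape_of_preservesMono (C := C) _

end Paper
end
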